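/- Orthogonality obstruction: let (M,g) be compact Riemannian, N smooth positive, and suppose W, V are vector fields satisfying the drift equation div_g((1/(2N)) L_g W) = κ d((1/N) div_g V), with κ = (n−1)/n. If additionally L_g W = 0 or div_g V = 0, then both L_g W = 0 and div_g V = 0. -/
import Mathlib


/- STATEMENT 15 (orthogonality obstruction).  M compact connected oriented n-manifold,
n ≥ 3, metric g, N smooth positive, κ = (n−1)/n.  `CK = L_g` is the conformal Killing
operator, `div` the divergence of vector fields, `divT` the divergence of symmetric
(0,2)-tensors (a 1-form), `d` the exterior derivative on functions, `ip` the pointwise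
inner product and `tr` the g-trace on tensors, `fs f B = f·B`, `pair` the L² pairing of
1-forms with vector fields, `I` integration against ω_g.  The hypotheses record:
trace-freeness of L_g X, the algebra of f·B, integration by parts for trace-free
tensors (∫⟨div B, X⟩ = −(1/2)∫⟨B, L_g X⟩ ω_g) and for functions
(∫⟨df, X⟩ = −∫ f div X ω_g), and positive-definiteness of the weighted L² pairings.
Claim: if W, V satisfy the drift equation
div_g((1/(2N)) L_g W) = κ d((1/N) div_g V), and L_g W = 0 or div_g V = 0, then both
L_g W = 0 and div_g V = 0. -/
theorem stmt15 {M Vec Ten Cov : Type*} [AddCommGroup Vec] [Module ℝ Vec]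
    [AddCommGroup Ten] [Module ℝ Ten] [AddCommGroup Cov] [Module ℝ Cov]
    (n : ℕ) (hn : 3 ≤ n)
    (κ : ℝ) (hκ : κ = ((n : ℝ) - 1) / n)
    (I : (M → ℝ) →ₗ[ℝ] ℝ)
    (ip : Ten → Ten → M → ℝ)
    (tr : Ten → M → ℝ)
    (fs : (M → ℝ) → Ten → Ten)
    (CK : Vec →ₗ[ℝ] Ten)
    (div : Vec →ₗ[ℝ] (M → ℝ))
    (divT : Ten →ₗ[ℝ] Cov)
    (d : (M → ℝ) →ₗ[ℝ] Cov)
    (pair : Cov → Vec → ℝ)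
    (N : M → ℝ) (hN : ∀ x, 0 < N x)
    (hCKtf : ∀ X : Vec, tr (CK X) = 0)
    (htrfs : ∀ f B, tr (fs f B) = fun x => f x * tr B x)
    (hipfs : ∀ f B C, ip (fs f B) C = fun x => f x * ip B C x)
    (hIBP_T : ∀ (B : Ten) (X : Vec), tr B = 0 →
      pair (divT B) X = -(1 / 2) * I (ip B (CK X)))
    (hIBP_d : ∀ (f : M → ℝ) (X : Vec), pair (d f) X = -I (fun x => f x * div X x))
    (hdefT : ∀ B : Ten, I (fun x => (2 * N x)⁻¹ * ip B B x) = 0 → B = 0)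
    (hdefF : ∀ f : M → ℝ, I (fun x => (N x)⁻¹ * f x * f x) = 0 → f = 0)
    (W V : Vec)
    (hdrift : divT (fs (fun x => (2 * N x)⁻¹) (CK W)) =
      κ • d (fun x => (N x)⁻¹ * div V x))
    (hor : CK W = 0 ∨ div V = 0) :
    CK W = 0 ∧ div V = 0 := by
  -- κ is nonzero
  have hn' : (0:ℝ) < (n:ℝ) := by positivity
  have hκpos : 0 < κ := by
    rw [hκ]
    apply div_pos _ hn'
    have : (3:ℝ) ≤ (n:ℝ) := by exact_mod_cast hn
    linarith
  have hκne : κ ≠ 0 := ne_of_gt hκpos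
  -- pairing with the zero covector vanishes
  have pair0 : ∀ X : Vec, pair (0 : Cov) X = 0 := by
    intro X
    have h1 := hIBP_d (0 : M → ℝ) X
    have h2 : d (0 : M → ℝ) = 0 := map_zero d
    rw [h2] at h1
    rw [h1]
    have : (fun x => (0 : M → ℝ) x * div X x) = (0 : M → ℝ) := by
      funext x; simp
    rw [this, map_zero]
    simp
  -- fs of the zero function is the zero tensor
  have fs0 : ∀ B : Ten, fs (fun _ => (0:ℝ)) B = 0 := by
    intro B
    apply hdefT
    have h1 := hipfs (fun _ => (0:ℝ)) B (fs (fun _ => (0:ℝ)) B)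
    rw [h1]
    have : (fun x => (2 * N x)⁻¹ * ((fun x => (0:ℝ) * ip B (fs (fun _ => (0:ℝ)) B) x) x))
        = (0 : M → ℝ) := by
      funext x; simp
    rw [this, map_zero]
  -- ip with zero tensor in the first slot vanishes
  have ip0 : ∀ C : Ten, ip (0 : Ten) C = (fun _ => (0:ℝ)) := by
    intro C
    have h0 := fs0 (0 : Ten)
    have h1 := hipfs (fun _ => (0:ℝ)) (0 : Ten) C
    rw [h0] at h1
    rw [h1]
    funext x; simp
  -- fs of the zero tensor is the zero tensor
  have fsz : ∀ f : M → ℝ, fs f (0 : Ten) = 0 := by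
    intro f
    apply hdefT
    have h1 := hipfs f (0 : Ten) (fs f (0 : Ten))
    rw [h1, ip0 (fs f (0 : Ten))]
    have : (fun x => (2 * N x)⁻¹ * ((fun x => f x * (0:ℝ)) x)) = (0 : M → ℝ) := by
      funext x; simp
    rw [this, map_zero]
  rcases hor with hW | hV
  · -- case CK W = 0 : show div V = 0
    refine ⟨hW, ?_⟩
    -- the drift equation collapses: LHS is divT (fs f 0) = 0
    have hL : divT (fs (fun x => (2 * N x)⁻¹) (CK W)) = 0 := by
      rw [hW, fsz, map_zero]
    have hR : κ • d (fun x => (N x)⁻¹ * div V x) = 0 := by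
      rw [← hdrift, hL]
    -- rewrite κ • d h = d (κ • h)
    have hR' : d (κ • (fun x => (N x)⁻¹ * div V x)) = 0 := by
      rw [map_smul]; exact hR
    have hp := hIBP_d (κ • (fun x => (N x)⁻¹ * div V x)) V
    rw [hR', pair0] at hp
    have hI : I (fun x => (κ • (fun x => (N x)⁻¹ * div V x)) x * div V x) = 0 := by
      linarith
    have hfun : (fun x => (κ • (fun x => (N x)⁻¹ * div V x)) x * div V x)
        = κ • (fun x => (N x)⁻¹ * div V x * div V x) := by
      funext x
      simp [Pi.smul_apply, smul_eq_mul]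
      ring
    rw [hfun, map_smul, smul_eq_mul] at hI
    have hI0 : I (fun x => (N x)⁻¹ * div V x * div V x) = 0 := by
      rcases mul_eq_zero.mp hI with h | h
      · exact absurd h hκne
      · exact h
    exact hdefF (div V) hI0
  · -- case div V = 0 : show CK W = 0
    refine ⟨?_, hV⟩
    -- RHS of drift vanishes
    have hh : (fun x => (N x)⁻¹ * div V x) = (0 : M → ℝ) := by
      funext x
      rw [hV]
      simp
    have hL : divT (fs (fun x => (2 * N x)⁻¹) (CK W)) = 0 := by
      rw [hdrift, hh, map_zero, smul_zero]
    -- the weighted tensor is trace-free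
    have htf : tr (fs (fun x => (2 * N x)⁻¹) (CK W)) = 0 := by
      rw [htrfs]
      funext x
      rw [hCKtf W]
      simp
    have hp := hIBP_T (fs (fun x => (2 * N x)⁻¹) (CK W)) W htf
    rw [hL, pair0] at hp
    have hI : I (ip (fs (fun x => (2 * N x)⁻¹) (CK W)) (CK W)) = 0 := by
      linarith
    rw [hipfs] at hI
    exact hdefT (CK W) hI
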